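/- Let (φ_{s,t}) be an evolution family in 𝔻. Then there exists a Lebesgue-null set N ⊂ [0,∞) such that for every t ∈ [0,∞)∖N and every z ∈ 𝔻 the limit G(z,t) := lim_{h→0⁺} (φ_{t,t+h}(z) − z)/h exists, and for each t ∉ N the map z ↦ G(z,t) is holomorphic on 𝔻. Moreover, setting G(z,t) := 0 for t ∈ N, the function G is an associated vector field of the family: for every z ∈ 𝔻 and all 0 ≤ s ≤ t, φ_{s,t}(z) = z + ∫_s^t G(φ_{s,ξ}(z), ξ) dξ. -/

import Mathlib

/-!
The family is locally absolutely continuous in time, so every orbit `ξ ↦ φ_{s,ξ}(z)` is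
differentiable almost everywhere and is the integral of its derivative; by the semigroup property
that derivative is `lim_{h → 0⁺} (φ_{ξ,ξ+h}(w) - w) / h` at `w = φ_{s,ξ}(z)`. Everything therefore
reduces to the locally uniform convergence, at almost every `t`, of the difference quotients
`F_h = (φ_{t,t+h} - id) / h` on `𝔻`; the limit is then holomorphic.

For almost every `t`, `φ_{t,t+h}` moves `0` and `1 / 2` by `O(h)` (Lebesgue differentiation of the
majorant). A self-map of `𝔻` that almost fixes two points is close to the identity on compact sets
(Schwarz–Pick), so the `F_h` are locally bounded and, by Cauchy's estimate, locally equi-Lipschitz.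
For almost every `t` they also converge at the points `φ_{q,t}(z)`, `z` in a countable dense set and
`q < t` rational, since these orbits are differentiable at `t`; such points are dense in `𝔻`.
Equi-Lipschitz families converging on a dense set converge locally uniformly.
-/

open Complex MeasureTheory Set Filter Topology

/-- The open unit disk `𝔻`. -/
def UD : Set ℂ := {z : ℂ | ‖z‖ < 1}

/-- A (continuous) evolution family in the unit disk: a two-parameter family of
holomorphic self-maps of `𝔻` satisfying the algebraic identities and a local
absolute-continuity condition. -/
structure EvolutionFamilyUD where
  φ : ℝ → ℝ → ℂ → ℂ
  mapsTo : ∀ ⦃s t : ℝ⦄, 0 ≤ s → s ≤ t → Set.MapsTo (φ s t) UD UD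
  holo : ∀ ⦃s t : ℝ⦄, 0 ≤ s → s ≤ t → DifferentiableOn ℂ (φ s t) UD
  id_eq : ∀ ⦃s : ℝ⦄, 0 ≤ s → ∀ z ∈ UD, φ s s z = z
  comp : ∀ ⦃s u t : ℝ⦄, 0 ≤ s → s ≤ u → u ≤ t → ∀ z ∈ UD,
    φ s t z = φ u t (φ s u z)
  ac : ∀ z ∈ UD, ∀ T : ℝ, 0 < T →
    ∃ k : ℝ → ℝ, (∀ ξ, 0 ≤ k ξ) ∧ MeasureTheory.IntegrableOn k (Set.Icc 0 T) ∧
      ∀ ⦃s u t : ℝ⦄, 0 ≤ s → s ≤ u → u ≤ t → t ≤ T →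
        ‖φ s u z - φ s t z‖ ≤ ∫ ξ in u..t, k ξ

open ComplexConjugate Metric
open scoped NNReal

theorem mem_UD {z : ℂ} : z ∈ UD ↔ ‖z‖ < 1 := Iff.rfl

theorem UD_eq_ball : UD = ball (0 : ℂ) 1 := by
  ext z; simp [UD]

theorem isOpen_UD : IsOpen UD := UD_eq_ball ▸ isOpen_ball

theorem zero_mem_UD : (0 : ℂ) ∈ UD := by simp [UD]

theorem half_mem_UD : (1 / 2 : ℂ) ∈ UD := by norm_num [UD]

noncomputable def diskMobius (a z : ℂ) : ℂ := (z - a) / (1 - conj a * z)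

section DiskMobius

variable {a w z : ℂ}

theorem normSq_sub_add_mul_eq (a w : ℂ) :
    normSq (w - a) + (1 - normSq a) * (1 - normSq w) = normSq (1 - conj a * w) := by
  simp only [normSq_apply, sub_re, sub_im, mul_re, mul_im, one_re, one_im, conj_re, conj_im]
  ring

theorem one_sub_conj_mul_ne_zero (ha : ‖a‖ < 1) (hw : ‖w‖ ≤ 1) : 1 - conj a * w ≠ 0 := by
  refine sub_ne_zero.2 fun h => ?_
  have : ‖conj a * w‖ < 1 := by
    rw [norm_mul, RCLike.norm_conj]
    nlinarith [norm_nonneg a, norm_nonneg w]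
  simp [← h] at this

theorem norm_diskMobius_lt_one (ha : ‖a‖ < 1) (hw : ‖w‖ < 1) : ‖diskMobius a w‖ < 1 := by
  have hden := one_sub_conj_mul_ne_zero ha hw.le
  rw [diskMobius, norm_div, div_lt_one (norm_pos_iff.2 hden), ← sq_lt_sq₀ (norm_nonneg _)
    (norm_nonneg _), Complex.sq_norm, Complex.sq_norm, ← normSq_sub_add_mul_eq a w]
  have h1 : normSq a < 1 := by rw [← Complex.sq_norm]; nlinarith [norm_nonneg a]
  have h2 : normSq w < 1 := by rw [← Complex.sq_norm]; nlinarith [norm_nonneg w]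
  nlinarith

theorem diskMobius_self (a : ℂ) : diskMobius a a = 0 := by simp [diskMobius]

theorem diskMobius_neg_zero (a : ℂ) : diskMobius (-a) 0 = a := by simp [diskMobius]

theorem diskMobius_neg_diskMobius (ha : ‖a‖ < 1) (hw : ‖w‖ < 1) :
    diskMobius (-a) (diskMobius a w) = w := by
  have h1 := one_sub_conj_mul_ne_zero ha hw.le
  have h2 : 1 - conj (-a) * diskMobius a w ≠ 0 :=
    one_sub_conj_mul_ne_zero (by rwa [norm_neg]) (norm_diskMobius_lt_one ha hw).le
  have h1' : 1 - w * conj a ≠ 0 := by rwa [mul_comm]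
  rw [diskMobius, div_eq_iff h2]
  simp only [diskMobius, map_neg] at h2 ⊢
  field_simp
  ring

theorem mapsTo_diskMobius (ha : ‖a‖ < 1) : MapsTo (diskMobius a) UD UD :=
  fun _ hw => norm_diskMobius_lt_one ha hw

theorem differentiableOn_diskMobius (ha : ‖a‖ < 1) : DifferentiableOn ℂ (diskMobius a) UD :=
  (differentiableOn_id.sub_const a).div ((differentiableOn_const 1).sub
    (differentiableOn_id.const_mul _)) fun _ hw => one_sub_conj_mul_ne_zero ha (le_of_lt hw)

theorem norm_diskMobius_sub_self_le (ha : ‖a‖ < 1) (hw : ‖w‖ ≤ 1) :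
    ‖diskMobius a w - w‖ ≤ 2 * ‖a‖ / (1 - ‖a‖) := by
  have hden := one_sub_conj_mul_ne_zero ha hw
  have hden' : 1 - ‖a‖ ≤ ‖1 - conj a * w‖ := by
    calc 1 - ‖a‖ ≤ 1 - ‖conj a * w‖ := by
          rw [norm_mul, RCLike.norm_conj]; nlinarith [norm_nonneg a]
      _ ≤ ‖1 - conj a * w‖ := by simpa using norm_sub_norm_le (1 : ℂ) (conj a * w)
  have hnum : ‖conj a * w ^ 2 - a‖ ≤ 2 * ‖a‖ := by
    calc ‖conj a * w ^ 2 - a‖ ≤ ‖conj a * w ^ 2‖ + ‖a‖ := norm_sub_le _ _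
      _ ≤ 2 * ‖a‖ := by
          rw [norm_mul, norm_pow, RCLike.norm_conj]
          nlinarith [norm_nonneg a, norm_nonneg w, pow_le_one₀ (norm_nonneg w) hw (n := 2)]
  have hsub : diskMobius a w - w = (conj a * w ^ 2 - a) / (1 - conj a * w) := by
    rw [diskMobius, div_sub' hden]; ring_nf
  rw [hsub, norm_div]
  exact div_le_div₀ (by positivity) hnum (by linarith) hden'

theorem one_sub_norm_diskMobius_ge (ha : ‖a‖ < 1) (hz : ‖z‖ < 1) :
    (1 - ‖a‖) * (1 - ‖z‖ ^ 2) / 4 ≤ 1 - ‖diskMobius a z‖ := by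
  have hden := one_sub_conj_mul_ne_zero ha hz.le
  set D := ‖1 - conj a * z‖
  set X := ‖z - a‖
  have hD : 0 < D := norm_pos_iff.2 hden
  have hD1 : D ≤ 1 + ‖a‖ := by
    calc D ≤ ‖(1 : ℂ)‖ + ‖conj a * z‖ := norm_sub_le _ _
      _ ≤ 1 + ‖a‖ := by
          rw [norm_one, norm_mul, RCLike.norm_conj]; nlinarith [norm_nonneg a, norm_nonneg z]
  have hid : X ^ 2 + (1 - ‖a‖ ^ 2) * (1 - ‖z‖ ^ 2) = D ^ 2 := by
    simp only [X, D, Complex.sq_norm]; exact_mod_cast normSq_sub_add_mul_eq a z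
  have hX : 0 ≤ X := norm_nonneg _
  have ha0 := norm_nonneg a
  have hz2 : 0 ≤ 1 - ‖z‖ ^ 2 := by nlinarith [norm_nonneg z]
  set c := (1 - ‖a‖) * (1 - ‖z‖ ^ 2)
  have hc : 0 ≤ c := mul_nonneg (sub_nonneg.2 ha.le) hz2
  have hXD : X ≤ D := by
    nlinarith [mul_nonneg hc (by linarith : (0 : ℝ) ≤ 1 + ‖a‖)]
  -- `(D - X) (D + X) = (1 + ‖a‖) c` with `D + X ≤ 2 D`, and `D ^ 2 ≤ 2 (1 + ‖a‖)`
  have hcD : c * D ^ 2 ≤ 2 * (1 + ‖a‖) * c := by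
    have : D ^ 2 ≤ 2 * (1 + ‖a‖) := by nlinarith
    nlinarith
  have hgap : (1 + ‖a‖) * c ≤ (D - X) * (2 * D) := by nlinarith
  rw [diskMobius, norm_div, le_sub_iff_add_le, ← le_sub_iff_add_le', div_le_iff₀ hD]
  nlinarith

end DiskMobius

section SchwarzPick

variable {f : ℂ → ℂ}

/-- The Schwarz–Pick lemma. -/
theorem norm_diskMobius_apply_le (hf : DifferentiableOn ℂ f UD) (hmaps : MapsTo f UD UD)
    {b z : ℂ} (hb : b ∈ UD) (hz : z ∈ UD) :
    ‖diskMobius (f b) (f z)‖ ≤ ‖diskMobius b z‖ := by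
  have hb' : ‖-b‖ < 1 := by rwa [norm_neg]
  set H := diskMobius (f b) ∘ f ∘ diskMobius (-b)
  have hH : DifferentiableOn ℂ H (ball 0 1) := by
    rw [← UD_eq_ball]
    exact (differentiableOn_diskMobius (hmaps hb)).comp
      (hf.comp (differentiableOn_diskMobius hb') (mapsTo_diskMobius hb'))
      (hmaps.comp (mapsTo_diskMobius hb'))
  have hHmaps : MapsTo H (ball 0 1) (closedBall 0 1) := by
    rw [← UD_eq_ball]
    exact ((mapsTo_diskMobius (hmaps hb)).comp (hmaps.comp (mapsTo_diskMobius hb'))).mono_right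
      (UD_eq_ball ▸ ball_subset_closedBall)
  have hH0 : H 0 = 0 := by simp [H, diskMobius_neg_zero, diskMobius_self]
  have hζ : ‖diskMobius b z‖ < 1 := norm_diskMobius_lt_one hb hz
  simpa [H, diskMobius_neg_diskMobius hb hz] using
    Complex.norm_le_norm_of_mapsTo_ball hH hHmaps hH0 hζ

theorem norm_sub_mul_le_of_norm_diskMobius {P w : ℂ} (hP : ‖P‖ < 1) (hw : ‖w‖ < 1) :
    ‖w - P‖ * (1 - ‖diskMobius P w‖) ≤ 1 - ‖P‖ ^ 2 := by
  have hden := one_sub_conj_mul_ne_zero hP hw.le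
  have hm : ‖w - P‖ = ‖diskMobius P w‖ * ‖1 - conj P * w‖ := by
    rw [diskMobius, norm_div, div_mul_cancel₀ _ (norm_ne_zero_iff.2 hden)]
  have hsplit : 1 - conj P * w = ((1 - ‖P‖ ^ 2 : ℝ) : ℂ) + conj P * (P - w) := by
    push_cast
    rw [← Complex.conj_mul']
    ring
  have hP2 : 0 ≤ 1 - ‖P‖ ^ 2 := by nlinarith [norm_nonneg P]
  have htri : ‖1 - conj P * w‖ ≤ (1 - ‖P‖ ^ 2) + ‖w - P‖ := by
    rw [hsplit]
    refine (norm_add_le _ _).trans (add_le_add ?_ ?_)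
    · rw [Complex.norm_real, Real.norm_eq_abs, abs_of_nonneg hP2]
    · rw [norm_mul, RCLike.norm_conj, norm_sub_rev]
      exact mul_le_of_le_one_left (norm_nonneg _) hP.le
  have hm1 := norm_diskMobius_lt_one hP hw
  nlinarith [norm_nonneg (w - P), norm_nonneg (diskMobius P w)]

theorem norm_sub_mul_le_of_mapsTo_closedBall (hf : DifferentiableOn ℂ f UD)
    (hmaps : MapsTo f UD (closedBall 0 1)) {b z : ℂ} (hb : b ∈ UD) (hz : z ∈ UD) :
    ‖f z - f b‖ * (1 - ‖diskMobius b z‖) ≤ 1 - ‖f b‖ ^ 2 := by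
  by_cases hmax : ∃ c ∈ UD, ‖f c‖ = 1
  · obtain ⟨c, hc, hc1⟩ := hmax
    have hconst := Complex.eqOn_of_isPreconnected_of_isMaxOn_norm
      (UD_eq_ball ▸ (convex_ball (0 : ℂ) 1).isPreconnected) isOpen_UD hf hc
      fun x hx => by simpa [hc1] using hmaps hx
    simp [hconst hz, hconst hb, hc1]
  push Not at hmax
  have hmaps' : MapsTo f UD UD := fun x hx =>
    lt_of_le_of_ne (by simpa using hmaps hx) (hmax x hx)
  calc ‖f z - f b‖ * (1 - ‖diskMobius b z‖)
      ≤ ‖f z - f b‖ * (1 - ‖diskMobius (f b) (f z)‖) :=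
        mul_le_mul_of_nonneg_left (by linarith [norm_diskMobius_apply_le hf hmaps' hb hz])
          (norm_nonneg _)
    _ ≤ 1 - ‖f b‖ ^ 2 := norm_sub_mul_le_of_norm_diskMobius (hmaps' hb) (hmaps' hz)

/-- Write `f z = z * q z`; then `q (1 / 2)` is close to `1`, and Schwarz–Pick for `q` at `1 / 2`
and `z` makes `q z` close to `q (1 / 2)`. -/
theorem norm_sub_self_le_of_map_zero (hf : DifferentiableOn ℂ f UD) (hmaps : MapsTo f UD UD)
    (hf0 : f 0 = 0) {r : ℝ} (hr : r < 1) {z : ℂ} (hz : ‖z‖ ≤ r) :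
    ‖f z - z‖ ≤ 34 / (1 - r ^ 2) * ‖f (1 / 2) - 1 / 2‖ := by
  have hzUD : z ∈ UD := hz.trans_lt hr
  have hr0 : 0 ≤ r := (norm_nonneg z).trans hz
  have hr2 : 0 < 1 - r ^ 2 := by nlinarith
  set q := dslope f 0
  have hq : DifferentiableOn ℂ q UD :=
    (differentiableOn_dslope (isOpen_UD.mem_nhds zero_mem_UD)).2 hf
  have hqmaps : MapsTo q UD (closedBall 0 1) := fun w hw => by
    rw [UD_eq_ball] at hf hmaps hw
    simpa using Complex.norm_dslope_le_div_of_mapsTo_ball hf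
      (hf0.symm ▸ hmaps.mono_right ball_subset_closedBall) hw
  have hfq : ∀ w, f w = w * q w := fun w => by simpa [hf0] using (sub_smul_dslope f 0 w).symm
  set δ := ‖f (1 / 2) - 1 / 2‖
  set P := q (1 / 2)
  have hP : ‖P‖ ≤ 1 := mem_closedBall_zero_iff.1 (hqmaps half_mem_UD)
  have hP1 : ‖P - 1‖ = 2 * δ := by
    rw [show P - 1 = 2 * (f (1 / 2) - 1 / 2) by rw [hfq]; ring, norm_mul, Complex.norm_two]
  have hP2 : 1 - ‖P‖ ^ 2 ≤ 4 * δ := by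
    have := norm_sub_norm_le 1 P
    rw [norm_one, norm_sub_rev, hP1] at this
    nlinarith [norm_nonneg P]
  have hgap : (1 - r ^ 2) / 8 ≤ 1 - ‖diskMobius (1 / 2) z‖ := by
    have := one_sub_norm_diskMobius_ge (a := 1 / 2) (by norm_num) hzUD
    norm_num at this
    nlinarith [norm_nonneg z]
  have hpick := norm_sub_mul_le_of_mapsTo_closedBall hq hqmaps half_mem_UD hzUD
  have hqz : ‖q z - P‖ * (1 - r ^ 2) ≤ 32 * δ := by
    nlinarith [norm_nonneg (q z - P)]
  have hδ : 0 ≤ δ := norm_nonneg _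
  calc ‖f z - z‖ = ‖z‖ * ‖q z - 1‖ := by rw [hfq, ← norm_mul]; ring_nf
    _ ≤ ‖q z - P‖ + ‖P - 1‖ :=
        (mul_le_of_le_one_left (norm_nonneg _) hzUD.le).trans
          (norm_sub_le_norm_sub_add_norm_sub _ _ _)
    _ ≤ 34 / (1 - r ^ 2) * δ := by
        rw [hP1, div_mul_eq_mul_div, le_div_iff₀ hr2]
        nlinarith

theorem norm_sub_self_le_of_mapsTo (hf : DifferentiableOn ℂ f UD) (hmaps : MapsTo f UD UD)
    {r : ℝ} (hr : r < 1) {z : ℂ} (hz : ‖z‖ ≤ r) :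
    ‖f z - z‖ ≤ 200 / (1 - r ^ 2) * (‖f 0‖ + ‖f (1 / 2) - 1 / 2‖) := by
  have hzUD : z ∈ UD := hz.trans_lt hr
  have hr2 : 0 < 1 - r ^ 2 := by nlinarith [norm_nonneg z]
  have hr2' : 1 ≤ 1 / (1 - r ^ 2) := by rw [le_div_iff₀ hr2]; nlinarith [norm_nonneg z]
  set ε := ‖f 0‖ + ‖f (1 / 2) - 1 / 2‖
  have hε : 0 ≤ ε := by positivity
  have hdiv : ∀ C : ℝ, C / (1 - r ^ 2) = C * (1 / (1 - r ^ 2)) := fun C => div_eq_mul_one_div _ _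
  by_cases hbig : 1 / 2 ≤ ε
  · calc ‖f z - z‖ ≤ ‖f z‖ + ‖z‖ := norm_sub_le _ _
      _ ≤ 200 / (1 - r ^ 2) * ε := by
          rw [hdiv 200]
          nlinarith [mem_UD.1 (hmaps hzUD), mem_UD.1 hzUD, mul_nonneg hε (sub_nonneg.2 hr2')]
  push Not at hbig
  set a := f 0
  have ha : ‖a‖ ≤ ε := le_add_of_nonneg_right (norm_nonneg _)
  have hhalf : ‖f (1 / 2) - 1 / 2‖ ≤ ε := le_add_of_nonneg_left (norm_nonneg _)
  have ha1 : ‖a‖ < 1 := by linarith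
  set g := diskMobius a ∘ f
  have hgf : ∀ w ∈ UD, ‖g w - f w‖ ≤ 4 * ε := fun w hw => by
    refine (norm_diskMobius_sub_self_le ha1 (hmaps hw).le).trans ?_
    rw [div_le_iff₀ (by linarith)]
    nlinarith [norm_nonneg a]
  have hg := norm_sub_self_le_of_map_zero ((differentiableOn_diskMobius ha1).comp hf hmaps)
    ((mapsTo_diskMobius ha1).comp hmaps) (diskMobius_self a) hr hz
  have hg_half : ‖g (1 / 2) - 1 / 2‖ ≤ 5 * ε := by
    calc ‖g (1 / 2) - 1 / 2‖ ≤ ‖g (1 / 2) - f (1 / 2)‖ + ‖f (1 / 2) - 1 / 2‖ :=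
          norm_sub_le_norm_sub_add_norm_sub _ _ _
      _ ≤ 5 * ε := by linarith [hgf _ half_mem_UD]
  calc ‖f z - z‖ ≤ ‖f z - g z‖ + ‖g z - z‖ := norm_sub_le_norm_sub_add_norm_sub _ _ _
    _ ≤ 4 * ε + 34 / (1 - r ^ 2) * (5 * ε) := by
        rw [norm_sub_rev]
        gcongr
        · exact hgf z hzUD
        · exact hg.trans (by gcongr)
    _ ≤ 200 / (1 - r ^ 2) * ε := by
        rw [hdiv 34, hdiv 200]
        nlinarith [mul_nonneg hε (sub_nonneg.2 hr2')]

end SchwarzPick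

section EquiLipschitz

variable {ι X Y : Type*} [PseudoMetricSpace X] [PseudoMetricSpace Y] {p : Filter ι}
  {F : ι → X → Y}

theorem uniformCauchySeqOn_of_eventually_lipschitzOnWith {L : ℝ≥0} {U K D : Set X}
    (hF : ∀ᶠ i in p, LipschitzOnWith L (F i) U) (hK : IsCompact K) (hKU : K ⊆ U) (hDU : D ⊆ U)
    (hKD : K ⊆ closure D) (hD : ∀ y ∈ D, UniformCauchySeqOn F p {y}) :
    UniformCauchySeqOn F p K := by
  intro u hu
  obtain ⟨ε, hε, hεu⟩ := Metric.mem_uniformity_dist.1 hu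
  set δ := ε / (3 * (L + 1))
  have hδ : 0 < δ := by positivity
  have hLδ : L * δ < ε / 3 := by
    rw [mul_div_assoc', div_lt_div_iff₀ (by positivity) (by norm_num)]
    nlinarith [L.coe_nonneg]
  obtain ⟨T, hTD, hTfin, hKT⟩ := hK.elim_finite_subcover_image (b := D) (c := fun y => ball y δ)
    (fun _ _ => isOpen_ball) fun x hx => by
      obtain ⟨y, hyD, hxy⟩ := Metric.mem_closure_iff.1 (hKD hx) δ hδ
      exact mem_biUnion hyD (mem_ball.2 hxy)
  have hT : ∀ᶠ m in p ×ˢ p, ∀ y ∈ T, dist (F m.1 y) (F m.2 y) < ε / 3 :=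
    (eventually_all_finite hTfin).2 fun y hy =>
      (hD y (hTD hy) _ (Metric.dist_mem_uniformity (by positivity))).mono fun m hm => hm y rfl
  filter_upwards [hT, tendsto_fst.eventually hF, tendsto_snd.eventually hF]
    with m hm hm₁ hm₂ x hx
  obtain ⟨y, hyT, hxy⟩ := mem_iUnion₂.1 (hKT hx)
  have hxy' : dist x y ≤ δ := (mem_ball.1 hxy).le
  apply hεu
  calc dist (F m.1 x) (F m.2 x)
      ≤ dist (F m.1 x) (F m.1 y) + dist (F m.1 y) (F m.2 y) + dist (F m.2 y) (F m.2 x) :=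
        dist_triangle4 _ _ _ _
    _ ≤ L * δ + dist (F m.1 y) (F m.2 y) + L * δ := by
        gcongr
        · exact (hm₁.dist_le_mul x (hKU hx) y (hDU (hTD hyT))).trans (by gcongr)
        · rw [dist_comm x y] at hxy'
          exact (hm₂.dist_le_mul y (hDU (hTD hyT)) x (hKU hx)).trans (by gcongr)
    _ < ε := by linarith [hm y hyT]

end EquiLipschitz

theorem lipschitzOnWith_closedBall_of_norm_le {E F : Type*} [NormedAddCommGroup E]
    [NormedSpace ℂ E] [NormedAddCommGroup F] [NormedSpace ℂ F] {f : E → F} {c : E} {ρ R M : ℝ}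
    (hf : DifferentiableOn ℂ f (ball c R)) (hM : ∀ x ∈ ball c R, ‖f x‖ ≤ M) (hρR : ρ < R) :
    LipschitzOnWith (2 * M / (R - ρ)).toNNReal f (closedBall c ρ) := by
  refine LipschitzOnWith.of_dist_le' fun z hz w hw => ?_
  have hRρ : 0 < R - ρ := sub_pos.2 hρR
  have hsub : ∀ {x}, x ∈ closedBall c ρ → ball x (R - ρ) ⊆ ball c R := fun hx =>
    ball_subset_ball' (by rw [mem_closedBall] at hx; linarith)
  have hosc : ∀ x ∈ ball c R, dist (f x) (f w) ≤ 2 * M := fun x hx =>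
    (dist_le_norm_add_norm _ _).trans (by linarith [hM x hx, hM w (hsub hw (mem_ball_self hRρ))])
  rcases lt_or_ge (dist z w) (R - ρ) with hzw | hzw
  · exact Complex.dist_le_div_mul_dist_of_mapsTo_ball (hf.mono (hsub hw))
      (fun x hx => mem_closedBall.2 (hosc x (hsub hw hx))) hzw
  · have hM0 : 0 ≤ M := (norm_nonneg _).trans (hM w (hsub hw (mem_ball_self hRρ)))
    calc dist (f z) (f w) ≤ 2 * M := hosc z (hsub hz (mem_ball_self hRρ))
      _ ≤ 2 * M / (R - ρ) * dist z w := by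
          rw [div_mul_eq_mul_div, le_div_iff₀ hRρ]
          nlinarith

section AbsolutelyContinuous

variable {a b : ℝ}

theorem AbsolutelyContinuousOnInterval.of_dist_le {X Y : Type*} [PseudoMetricSpace X]
    [PseudoMetricSpace Y] {f : ℝ → X} {g : ℝ → Y} (hg : AbsolutelyContinuousOnInterval g a b)
    (h : ∀ x ∈ uIcc a b, ∀ y ∈ uIcc a b, dist (f x) (f y) ≤ dist (g x) (g y)) :
    AbsolutelyContinuousOnInterval f a b := by
  refine squeeze_zero' (Eventually.of_forall fun _ => Finset.sum_nonneg fun _ _ => dist_nonneg)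
    ?_ hg
  filter_upwards [mem_inf_of_right (mem_principal_self _)] with E hE
  exact Finset.sum_le_sum fun i hi => h _ (hE.1 i hi).1 _ (hE.1 i hi).2

theorem absolutelyContinuousOnInterval_of_dist_le_integral {X : Type*} [PseudoMetricSpace X]
    {f : ℝ → X} {k : ℝ → ℝ} (hab : a ≤ b) (hk : IntervalIntegrable k volume a b)
    (h : ∀ u v, a ≤ u → u ≤ v → v ≤ b → dist (f u) (f v) ≤ ∫ ξ in u..v, k ξ) :
    AbsolutelyContinuousOnInterval f a b := by
  refine (hk.absolutelyContinuousOnInterval_intervalIntegral left_mem_uIcc).of_dist_le ?_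
  have hk' : ∀ x ∈ uIcc a b, IntervalIntegrable k volume a x := fun x hx =>
    hk.mono_set (uIcc_subset_uIcc left_mem_uIcc hx)
  have hle : ∀ u ∈ uIcc a b, ∀ v ∈ uIcc a b, u ≤ v →
      dist (f u) (f v) ≤ dist (∫ ξ in a..u, k ξ) (∫ ξ in a..v, k ξ) := by
    intro u hu v hv huv
    rw [uIcc_of_le hab] at hu hv
    rw [Real.dist_eq, abs_sub_comm, intervalIntegral.integral_interval_sub_left (hk' v (by
      rwa [uIcc_of_le hab])) (hk' u (by rwa [uIcc_of_le hab]))]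
    exact (h u v hu.1 huv hv.2).trans (le_abs_self _)
  intro u hu v hv
  rcases le_total u v with huv | hvu
  · exact hle u hu v hv huv
  · rw [dist_comm, dist_comm (∫ ξ in a..u, k ξ)]
    exact hle v hv u hu hvu

theorem HasDerivAt.of_re_im {f : ℝ → ℂ} {x u v : ℝ} (hre : HasDerivAt (fun t => (f t).re) u x)
    (him : HasDerivAt (fun t => (f t).im) v x) : HasDerivAt f (u + v * I) x := by
  have h := hre.ofReal_comp.add (him.ofReal_comp.mul_const I)
  rwa [show (fun t => ((f t).re : ℂ)) + (fun t => ((f t).im : ℂ) * I) = f from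
    funext fun t => re_add_im (f t)] at h

variable {f : ℝ → ℂ}

theorem AbsolutelyContinuousOnInterval.re (hf : AbsolutelyContinuousOnInterval f a b) :
    AbsolutelyContinuousOnInterval (fun t => (f t).re) a b :=
  hf.of_dist_le fun x _ y _ => by
    simpa [Complex.dist_eq, Real.dist_eq] using abs_re_le_norm (f x - f y)

theorem AbsolutelyContinuousOnInterval.im (hf : AbsolutelyContinuousOnInterval f a b) :
    AbsolutelyContinuousOnInterval (fun t => (f t).im) a b :=
  hf.of_dist_le fun x _ y _ => by
    simpa [Complex.dist_eq, Real.dist_eq] using abs_im_le_norm (f x - f y)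

theorem AbsolutelyContinuousOnInterval.ae_hasDerivAt_deriv_re_im
    (hf : AbsolutelyContinuousOnInterval f a b) :
    ∀ᵐ x, x ∈ uIcc a b → HasDerivAt f
      (deriv (fun t => (f t).re) x + deriv (fun t => (f t).im) x * I) x := by
  filter_upwards [hf.re.ae_differentiableAt, hf.im.ae_differentiableAt] with x hre him hx
  exact (hre hx).hasDerivAt.of_re_im (him hx).hasDerivAt

theorem AbsolutelyContinuousOnInterval.ae_hasDerivAt (hf : AbsolutelyContinuousOnInterval f a b) :
    ∀ᵐ x, x ∈ uIcc a b → HasDerivAt f (deriv f x) x := by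
  filter_upwards [hf.ae_hasDerivAt_deriv_re_im] with x hx hmem
  exact (hx hmem).differentiableAt.hasDerivAt

theorem AbsolutelyContinuousOnInterval.integral_deriv_eq_sub_complex
    (hf : AbsolutelyContinuousOnInterval f a b) : ∫ x in a..b, deriv f x = f b - f a := by
  have hderiv : ∀ᵐ x, x ∈ uIoc a b →
      deriv f x = deriv (fun t => (f t).re) x + deriv (fun t => (f t).im) x * I := by
    filter_upwards [hf.ae_hasDerivAt_deriv_re_im] with x hx hmem
    exact (hx (uIoc_subset_uIcc hmem)).deriv
  rw [intervalIntegral.integral_congr_ae hderiv, intervalIntegral.integral_add,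
    intervalIntegral.integral_mul_const, intervalIntegral.integral_ofReal,
    intervalIntegral.integral_ofReal, hf.re.integral_deriv_eq_sub, hf.im.integral_deriv_eq_sub]
  · apply Complex.ext <;> simp
  · have h := hf.re.intervalIntegrable_deriv
    exact ⟨h.1.ofReal, h.2.ofReal⟩
  · have h := hf.im.intervalIntegrable_deriv
    exact ⟨h.1.ofReal.mul_const I, h.2.ofReal.mul_const I⟩

end AbsolutelyContinuous

theorem HasDerivAt.tendsto_div_nhdsGT {f : ℝ → ℂ} {d : ℂ} {t : ℝ} (hf : HasDerivAt f d t) :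
    Tendsto (fun h : ℝ => (f (t + h) - f t) / (h : ℂ)) (𝓝[>] 0) (𝓝 d) := by
  refine ((hasDerivAt_iff_tendsto_slope_zero.1 hf).mono_left
    (nhdsWithin_mono _ fun h hh => ne_of_gt hh)).congr fun h => ?_
  rw [Complex.real_smul, ofReal_inv, div_eq_inv_mul]

namespace EvolutionFamilyUD

variable (E : EvolutionFamilyUD) {S : Set ℂ} {s t : ℝ} {w z : ℂ}

noncomputable def diffQuot (t h : ℝ) (z : ℂ) : ℂ := (E.φ t (t + h) z - z) / h

theorem differentiableOn_diffQuot (ht : 0 ≤ t) {h : ℝ} (hh : 0 ≤ h) :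
    DifferentiableOn ℂ (E.diffQuot t h) UD :=
  ((E.holo ht (le_add_of_nonneg_right hh)).sub differentiableOn_id).div_const _

theorem absolutelyContinuousOnInterval_φ {T : ℝ} (hs : 0 ≤ s) (hsT : s ≤ T) (hz : z ∈ UD) :
    AbsolutelyContinuousOnInterval (fun ξ => E.φ s ξ z) s T := by
  obtain ⟨k, -, hk, hbound⟩ := E.ac z hz (T + 1) (by linarith)
  refine absolutelyContinuousOnInterval_of_dist_le_integral (k := k) hsT ?_
    fun u v hu huv hv => ?_
  · exact (intervalIntegrable_iff_integrableOn_Icc_of_le hsT).2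
      (hk.mono_set (Icc_subset_Icc hs (by linarith)))
  · rw [dist_eq_norm]
    exact hbound hs hu huv (by linarith)

theorem ae_differentiableAt_φ (hs : 0 ≤ s) (hz : z ∈ UD) :
    ∀ᵐ t, s < t → DifferentiableAt ℝ (fun ξ => E.φ s ξ z) t := by
  have h : ∀ n : ℕ, ∀ᵐ t, t ∈ uIcc s (s + n) →
      HasDerivAt (fun ξ => E.φ s ξ z) (deriv (fun ξ => E.φ s ξ z) t) t := fun n =>
    (E.absolutelyContinuousOnInterval_φ hs (le_add_of_nonneg_right n.cast_nonneg) hz).ae_hasDerivAt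
  filter_upwards [ae_all_iff.2 h] with t ht hst
  obtain ⟨n, hn⟩ := exists_nat_ge (t - s)
  refine (ht n ?_).differentiableAt
  rw [uIcc_of_le (le_add_of_nonneg_right n.cast_nonneg)]
  exact ⟨hst.le, by linarith⟩

theorem tendsto_φ_nhdsLT (ht : 0 < t) (hz : z ∈ UD) :
    Tendsto (fun s => E.φ s t z) (𝓝[<] t) (𝓝 z) := by
  obtain ⟨k, -, hk, hbound⟩ := E.ac z hz t ht
  have hK : Tendsto (fun s => ∫ ξ in s..t, k ξ) (𝓝[<] t) (𝓝 0) := by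
    rw [← uIcc_of_le ht.le] at hk
    have := intervalIntegral.continuousOn_primitive_interval_left hk t right_mem_uIcc
    simpa using (this.mono_of_mem_nhdsWithin
      (by rw [uIcc_of_le ht.le]; exact Icc_mem_nhdsLT ht)).tendsto
  rw [tendsto_iff_norm_sub_tendsto_zero]
  refine squeeze_zero' (Eventually.of_forall fun _ => norm_nonneg _) ?_ hK
  filter_upwards [Ioo_mem_nhdsLT ht] with s hs
  rw [norm_sub_rev]
  simpa [E.id_eq hs.1.le z hz] using hbound hs.1.le le_rfl hs.2.le le_rfl

/-- Lebesgue differentiation of the majorant `k` of the definition gives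
`|φ_{t,t+h}(w) - w| ≤ ∫_t^{t+h} k = O(h)` at almost every `t`. -/
theorem ae_isBigO_φ_sub (hw : w ∈ UD) :
    ∀ᵐ t, 0 ≤ t → (fun h => E.φ t (t + h) w - w) =O[𝓝[>] 0] id := by
  suffices h : ∀ n : ℕ, ∀ᵐ t, t ∈ Ico 0 (n + 1 : ℝ) →
      (fun h => E.φ t (t + h) w - w) =O[𝓝[>] 0] id by
    filter_upwards [ae_all_iff.2 h] with t ht h0
    exact ht ⌈t⌉₊ ⟨h0, (Nat.le_ceil t).trans_lt (lt_add_one _)⟩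
  intro n
  have hn : (0 : ℝ) ≤ n + 1 := by positivity
  obtain ⟨k, -, hk, hbound⟩ := E.ac w hw (n + 1) (by positivity)
  have hk' : IntervalIntegrable k volume 0 (n + 1) :=
    (intervalIntegrable_iff_integrableOn_Icc_of_le hn).2 hk
  filter_upwards [hk'.ae_hasDerivAt_integral] with t hderiv ht
  have htI : t ∈ uIcc 0 (n + 1 : ℝ) := by rw [uIcc_of_le hn]; exact Ico_subset_Icc_self ht
  have hK := (hderiv htI 0 left_mem_uIcc).isBigO_sub
  have hshift : Tendsto (fun h => t + h) (𝓝[>] 0) (𝓝 t) :=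
    tendsto_nhdsWithin_of_tendsto_nhds (by simpa using (continuous_const_add t).tendsto 0)
  refine (Asymptotics.IsBigO.of_bound 1 ?_).trans ((hK.comp_tendsto hshift).congr_right
    fun h => by simp)
  filter_upwards [Ioo_mem_nhdsGT (sub_pos.2 ht.2)] with h hh
  have hmem : t + h ∈ uIcc 0 (n + 1 : ℝ) := by
    rw [uIcc_of_le hn]; constructor <;> linarith [hh.1, hh.2, ht.1]
  calc ‖E.φ t (t + h) w - w‖ = ‖E.φ t t w - E.φ t (t + h) w‖ := by
        rw [E.id_eq ht.1 w hw, norm_sub_rev]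
    _ ≤ ∫ ξ in t..t + h, k ξ := hbound ht.1 le_rfl (by linarith [hh.1]) (by linarith [hh.2])
    _ ≤ 1 * ‖(∫ ξ in 0..t + h, k ξ) - ∫ ξ in 0..t, k ξ‖ := by
        rw [one_mul, intervalIntegral.integral_interval_sub_left
          (hk'.mono_set (uIcc_subset_uIcc left_mem_uIcc hmem))
          (hk'.mono_set (uIcc_subset_uIcc left_mem_uIcc htI))]
        exact Real.le_norm_self _

theorem tendsto_diffQuot_φ (hs : 0 ≤ s) (hst : s ≤ t) (hz : z ∈ UD) {d : ℂ}
    (hd : HasDerivAt (fun ξ => E.φ s ξ z) d t) :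
    Tendsto (fun h => E.diffQuot t h (E.φ s t z)) (𝓝[>] 0) (𝓝 d) := by
  refine hd.tendsto_div_nhdsGT.congr' ?_
  filter_upwards [self_mem_nhdsWithin] with h (hh : 0 < h)
  rw [diffQuot, ← E.comp hs hst (by linarith) z hz]

/-- The times at which the difference quotients `E.diffQuot t h` are shown to converge. -/
structure IsRegularTime (S : Set ℂ) (t : ℝ) : Prop where
  pos : 0 < t
  isBigO : ∀ w ∈ ({0, 1 / 2} : Set ℂ), (fun h => E.φ t (t + h) w - w) =O[𝓝[>] 0] id
  differentiableAt : ∀ z ∈ S ∩ UD, ∀ q : ℚ, 0 ≤ (q : ℝ) → (q : ℝ) < t →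
    DifferentiableAt ℝ (fun ξ => E.φ q ξ z) t

theorem ae_isRegularTime (hS : S.Countable) : ∀ᵐ t, 0 ≤ t → E.IsRegularTime S t := by
  have hbase : ∀ᵐ t, ∀ w ∈ ({0, 1 / 2} : Set ℂ), 0 ≤ t →
      (fun h => E.φ t (t + h) w - w) =O[𝓝[>] 0] id :=
    (ae_ball_iff (toFinite _).countable).2 fun w hw => E.ae_isBigO_φ_sub (by
      rcases hw with rfl | rfl
      exacts [zero_mem_UD, half_mem_UD])
  have horbit : ∀ᵐ t, ∀ z ∈ S ∩ UD, ∀ q : ℚ, 0 ≤ (q : ℝ) → (q : ℝ) < t →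
      DifferentiableAt ℝ (fun ξ => E.φ q ξ z) t :=
    (ae_ball_iff (hS.mono inter_subset_left)).2 fun z hz => ae_all_iff.2 fun q => by
      by_cases hq : 0 ≤ (q : ℝ)
      · filter_upwards [E.ae_differentiableAt_φ hq hz.2] with t ht _ using ht
      · exact Eventually.of_forall fun t hq' => absurd hq' hq
  filter_upwards [hbase, horbit, compl_mem_ae_iff.2 (measure_singleton 0)] with t h1 h2 h3 h0
  exact ⟨lt_of_le_of_ne h0 (Ne.symm h3), fun w hw => h1 w hw h0, h2⟩

def orbitPoints (S : Set ℂ) (t : ℝ) : Set ℂ :=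
  {w | ∃ z ∈ S ∩ UD, ∃ q : ℚ, 0 ≤ (q : ℝ) ∧ (q : ℝ) < t ∧ E.φ q t z = w}

theorem UD_subset_closure_orbitPoints (hS : Dense S) (ht : 0 < t) :
    UD ⊆ closure (E.orbitPoints S t) := by
  intro z hz
  refine Metric.mem_closure_iff.2 fun ε hε => ?_
  obtain ⟨z', hz'S, hz'z, hz'⟩ :=
    hS.exists_mem_open (isOpen_ball.inter isOpen_UD) ⟨z, mem_ball_self (half_pos hε), hz⟩
  have hev : ∀ᶠ s in 𝓝[<] t, s ∈ Ioo 0 t ∧ E.φ s t z' ∈ ball z' (ε / 2) :=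
    Eventually.and (Ioo_mem_nhdsLT ht)
      ((E.tendsto_φ_nhdsLT ht hz').eventually (ball_mem_nhds _ (half_pos hε)))
  obtain ⟨l, hl, hsub⟩ := mem_nhdsLT_iff_exists_Ioo_subset.1 hev
  obtain ⟨q, hlq, hqt⟩ := exists_rat_btwn (mem_Iio.1 hl)
  obtain ⟨hq, hqz'⟩ := hsub ⟨hlq, hqt⟩
  refine ⟨E.φ q t z', ⟨z', ⟨hz'S, hz'⟩, q, hq.1.le, hqt, rfl⟩, ?_⟩
  calc dist z (E.φ q t z') ≤ dist z z' + dist (E.φ q t z') z' := dist_triangle_right _ _ _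
    _ < ε / 2 + ε / 2 := add_lt_add (by rw [dist_comm]; exact hz'z) hqz'
    _ = ε := add_halves ε

namespace IsRegularTime

variable {E}

theorem exists_tendsto_diffQuot (ht : E.IsRegularTime S t) (hw : w ∈ E.orbitPoints S t) :
    ∃ c, Tendsto (fun h => E.diffQuot t h w) (𝓝[>] 0) (𝓝 c) := by
  obtain ⟨z, hz, q, hq, hqt, rfl⟩ := hw
  exact ⟨_, E.tendsto_diffQuot_φ hq hqt.le hz.2 (ht.differentiableAt z hz q hq hqt).hasDerivAt⟩

/-- The `O(h)` displacement of `0` and `1 / 2` controls `φ_{t,t+h} - id` on smaller disks by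
`norm_sub_self_le_of_mapsTo`. -/
theorem exists_bound (ht : E.IsRegularTime S t) {r : ℝ} (hr : r < 1) :
    ∃ M, ∀ᶠ h in 𝓝[>] 0, ∀ z ∈ closedBall (0 : ℂ) r, ‖E.diffQuot t h z‖ ≤ M := by
  obtain ⟨C₀, hC₀⟩ := (ht.isBigO 0 (by simp)).bound
  obtain ⟨C₁, hC₁⟩ := (ht.isBigO (1 / 2) (by simp)).bound
  refine ⟨200 / (1 - r ^ 2) * (C₀ + C₁), ?_⟩
  filter_upwards [hC₀, hC₁, self_mem_nhdsWithin] with h h₀ h₁ (hh : 0 < h) z hz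
  rw [mem_closedBall_zero_iff] at hz
  have hr2 : 0 ≤ 200 / (1 - r ^ 2) := div_nonneg (by norm_num) (by nlinarith [norm_nonneg z])
  have hht : t ≤ t + h := le_add_of_nonneg_right hh.le
  simp only [sub_zero, id, Real.norm_of_nonneg hh.le] at h₀ h₁
  rw [diffQuot, norm_div, Complex.norm_real, Real.norm_of_nonneg hh.le, div_le_iff₀ hh]
  calc ‖E.φ t (t + h) z - z‖
      ≤ 200 / (1 - r ^ 2) * (‖E.φ t (t + h) 0‖ + ‖E.φ t (t + h) (1 / 2) - 1 / 2‖) :=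
        norm_sub_self_le_of_mapsTo (E.holo ht.pos.le hht) (E.mapsTo ht.pos.le hht) hr hz
    _ ≤ 200 / (1 - r ^ 2) * (C₀ * h + C₁ * h) := by gcongr
    _ = 200 / (1 - r ^ 2) * (C₀ + C₁) * h := by ring

theorem exists_lipschitzOnWith (ht : E.IsRegularTime S t) {ρ : ℝ} (hρ : ρ < 1) :
    ∃ L, ∀ᶠ h in 𝓝[>] 0, LipschitzOnWith L (E.diffQuot t h) (closedBall 0 ρ) := by
  obtain ⟨M, hM⟩ := ht.exists_bound (r := (1 + ρ) / 2) (by linarith)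
  refine ⟨(2 * M / ((1 + ρ) / 2 - ρ)).toNNReal, ?_⟩
  filter_upwards [hM, self_mem_nhdsWithin] with h hb (hh : 0 < h)
  have hsub : ball (0 : ℂ) ((1 + ρ) / 2) ⊆ UD := UD_eq_ball ▸ ball_subset_ball (by linarith)
  exact lipschitzOnWith_closedBall_of_norm_le
    ((E.differentiableOn_diffQuot ht.pos.le hh.le).mono hsub)
    (fun x hx => hb x (ball_subset_closedBall hx)) (by linarith)

theorem uniformCauchySeqOn (hS : Dense S) (ht : E.IsRegularTime S t) {ρ : ℝ} (hρ : ρ < 1) :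
    UniformCauchySeqOn (E.diffQuot t) (𝓝[>] 0) (closedBall 0 ρ) := by
  obtain ⟨L, hL⟩ := ht.exists_lipschitzOnWith (ρ := (1 + ρ) / 2) (by linarith)
  have hρ' : closedBall (0 : ℂ) ρ ⊆ ball 0 ((1 + ρ) / 2) := closedBall_subset_ball (by linarith)
  refine uniformCauchySeqOn_of_eventually_lipschitzOnWith hL (isCompact_closedBall 0 ρ)
    (hρ'.trans ball_subset_closedBall) (inter_subset_left.trans ball_subset_closedBall)
    (fun x hx => isOpen_ball.inter_closure ⟨hρ' hx, E.UD_subset_closure_orbitPoints hS ht.pos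
      (UD_eq_ball ▸ ball_subset_ball (by linarith) (hρ' hx))⟩) fun w hw => ?_
  obtain ⟨c, hc⟩ := ht.exists_tendsto_diffQuot hw.2
  exact (tendstoUniformlyOn_singleton_iff_tendsto (f := fun _ => c)).2 hc |>.uniformCauchySeqOn

theorem tendstoLocallyUniformlyOn (hS : Dense S) (ht : E.IsRegularTime S t) :
    TendstoLocallyUniformlyOn (E.diffQuot t)
      (fun z => limUnder (𝓝[>] 0) fun h => E.diffQuot t h z) (𝓝[>] 0) UD := by
  rw [tendstoLocallyUniformlyOn_iff_forall_isCompact isOpen_UD]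
  intro K hKU hK
  obtain ⟨ρ, hρ, hKρ⟩ := exists_lt_subset_ball hK.isClosed (UD_eq_ball ▸ hKU)
  have hC := (ht.uniformCauchySeqOn hS hρ).mono (hKρ.trans ball_subset_closedBall)
  refine hC.tendstoUniformlyOn_of_tendsto fun z hz => ?_
  obtain ⟨c, hc⟩ := cauchy_map_iff_exists_tendsto.1 (hC.cauchy_map hz)
  rwa [hc.limUnder_eq]

end IsRegularTime

theorem φ_eq_add_integral {G : ℂ → ℝ → ℂ}
    (hG : ∀ᵐ ξ, 0 ≤ ξ → ∀ w ∈ UD, Tendsto (fun h => E.diffQuot ξ h w) (𝓝[>] 0) (𝓝 (G w ξ)))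
    (hs : 0 ≤ s) (hst : s ≤ t) (hz : z ∈ UD) :
    E.φ s t z = z + ∫ ξ in s..t, G (E.φ s ξ z) ξ := by
  have hac := E.absolutelyContinuousOnInterval_φ hs hst hz
  have hderiv : ∀ᵐ ξ, ξ ∈ uIoc s t → deriv (fun ξ => E.φ s ξ z) ξ = G (E.φ s ξ z) ξ := by
    filter_upwards [hG, hac.ae_hasDerivAt] with ξ hGξ hd hξ
    have hsξ : s ≤ ξ := by rw [uIoc_of_le hst] at hξ; exact hξ.1.le
    exact tendsto_nhds_unique (E.tendsto_diffQuot_φ hs hsξ hz (hd (uIoc_subset_uIcc hξ)))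
      (hGξ (hs.trans hsξ) _ (E.mapsTo hs hsξ hz))
  rw [← intervalIntegral.integral_congr_ae hderiv, hac.integral_deriv_eq_sub_complex,
    E.id_eq hs z hz, add_sub_cancel]

end EvolutionFamilyUD

/-- [Almost-everywhere Berkson-Porta for evolution families]  For every evolution family
in `𝔻` there is a Lebesgue-null set `N ⊂ [0,∞)` such that for `t ∉ N` and every `z ∈ 𝔻`
the limit `G(z,t) = lim_{h→0⁺}(φ_{t,t+h}(z) − z)/h` exists and defines a holomorphic map
in `z`; setting `G(·,t) = 0` for `t ∈ N`, `G` is an associated vector field: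
`φ_{s,t}(z) = z + ∫_s^t G(φ_{s,ξ}(z), ξ) dξ`. -/
theorem evolutionFamilyUD_ae_vector_field (E : EvolutionFamilyUD) :
    ∃ N : Set ℝ, N ⊆ Set.Ici (0:ℝ) ∧ MeasureTheory.volume N = 0 ∧
    ∃ G : ℂ → ℝ → ℂ,
      (∀ t : ℝ, 0 ≤ t → t ∉ N →
        (∀ z ∈ UD, Tendsto (fun h : ℝ => (E.φ t (t + h) z - z) / (h : ℂ))
          (𝓝[>] (0:ℝ)) (𝓝 (G z t))) ∧
        DifferentiableOn ℂ (fun z => G z t) UD) ∧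
      (∀ t ∈ N, ∀ z : ℂ, G z t = 0) ∧
      (∀ ⦃s t : ℝ⦄, 0 ≤ s → s ≤ t → ∀ z ∈ UD,
        E.φ s t z = z + ∫ ξ in s..t, G (E.φ s ξ z) ξ) := by
  classical
  obtain ⟨S, hSc, hSd⟩ := TopologicalSpace.exists_countable_dense ℂ
  set N := {t : ℝ | 0 ≤ t ∧ ¬E.IsRegularTime S t}
  have hN : ∀ᵐ t, t ∉ N := by
    filter_upwards [E.ae_isRegularTime hSc] with t ht htN using htN.2 (ht htN.1)
  set G : ℂ → ℝ → ℂ := fun z t => if t ∈ N then 0 else limUnder (𝓝[>] 0) (E.diffQuot t · z)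
  have hG : ∀ t, 0 ≤ t → t ∉ N →
      TendstoLocallyUniformlyOn (E.diffQuot t) (fun z => G z t) (𝓝[>] 0) UD := fun t h0 ht => by
    simpa only [G, if_neg ht] using (not_and_not_right.1 ht h0).tendstoLocallyUniformlyOn hSd
  refine ⟨N, fun t ht => ht.1, measure_eq_zero_iff_ae_notMem.2 hN, G, fun t h0 ht => ⟨?_, ?_⟩,
    fun t ht z => by simp only [G, if_pos ht],
    fun s t hs hst z hz => E.φ_eq_add_integral ?_ hs hst hz⟩
  · exact fun z hz => (hG t h0 ht).tendsto_at hz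
  · refine (hG t h0 ht).differentiableOn ?_ isOpen_UD
    filter_upwards [self_mem_nhdsWithin] with h (hh : 0 < h)
    exact E.differentiableOn_diffQuot h0 hh.le
  · filter_upwards [hN] with ξ hξ h0 w hw using (hG ξ h0 hξ).tendsto_at hw
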